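/- arXiv:cs/0703020 — 4 statements merged into one kernel-verified Lean document; each statement's English description precedes it below -/
import Mathlib

section
/- Let A = (A_1, …, A_n) be a sequence of positive integers and let 1 ≤ i ≤ n be a position with A_i ∉ {A_1, …, A_{i−1}} (a newly received packet). Then exactly one of the following two alternatives holds: (1) A_i > ACK_{A,i−1}, B_{A,i} = B_{A,i−1} + 1, and ACK_{A,i} = ACK_{A,i−1} (the new packet is out-of-order and is buffered); or (2) A_i = ACK_{A,i−1}, B_{A,i} ≤ B_{A,i−1}, and ACK_{A,i} = ACK_{A,i−1} + B_{A,i−1} − B_{A,i} + 1 (the new packet fills the first gap). In particular, if additionally B_{A,i} = B_{A,i−1}, then A_i = ACK_{A,i−1} and ACK_{A,i} = ACK_{A,i−1} + 1. -/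
/-- `ACK A i` is the acknowledgement after the first `i` packets of the 1-indexed
sequence `A`: the least positive integer not among `A 1, …, A i`.
In particular `ACK A 0 = 1`. -/
noncomputable def ACK (A : ℕ → ℕ) (i : ℕ) : ℕ :=
  sInf {k : ℕ | 0 < k ∧ ∀ j, 1 ≤ j → j ≤ i → A j ≠ k}

/-- `bufSize A i` is the buffer size after the first `i` packets of the 1-indexed
sequence `A`: the number of distinct values among `A 1, …, A i` that are
`≥ ACK A i`. In particular `bufSize A 0 = 0`. -/
noncomputable def bufSize (A : ℕ → ℕ) (i : ℕ) : ℕ :=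
  (((Finset.Icc 1 i).image A).filter (fun v => ACK A i ≤ v)).card

/-- `A` (1-indexed) is a permutation of `{1, …, n}`: every integer in `{1, …, n}`
occurs exactly once among `A 1, …, A n`. -/
def IsPermSeq (n : ℕ) (A : ℕ → ℕ) : Prop :=
  Set.BijOn A (Set.Icc 1 n) (Set.Icc 1 n)

lemma ack_spec (A : ℕ → ℕ) (i : ℕ) :
    0 < ACK A i ∧ ∀ j, 1 ≤ j → j ≤ i → A j ≠ ACK A i := by
  have hne : {k : ℕ | 0 < k ∧ ∀ j, 1 ≤ j → j ≤ i → A j ≠ k}.Nonempty := by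
    refine ⟨(Finset.Icc 1 i).sup A + 1, Nat.succ_pos _, fun j h1 h2 h => ?_⟩
    have hle : A j ≤ (Finset.Icc 1 i).sup A :=
      Finset.le_sup (Finset.mem_Icc.mpr ⟨h1, h2⟩)
    omega
  exact Nat.sInf_mem hne

lemma ack_min (A : ℕ → ℕ) (i k : ℕ) (hk : 0 < k) (hlt : k < ACK A i) :
    ∃ j, 1 ≤ j ∧ j ≤ i ∧ A j = k := by
  by_contra h
  push_neg at h
  have : ACK A i ≤ k := Nat.sInf_le ⟨hk, fun j h1 h2 => h j h1 h2⟩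
  omega

lemma card_image_eq (A : ℕ → ℕ) (i : ℕ) (hpos : ∀ j, 1 ≤ j → j ≤ i → 0 < A j) :
    ((Finset.Icc 1 i).image A).card = ACK A i - 1 + bufSize A i := by
  classical
  set S := (Finset.Icc 1 i).image A with hS
  have h1 : S.filter (fun v => ¬ ACK A i ≤ v) = Finset.Icc 1 (ACK A i - 1) := by
    ext v
    simp only [Finset.mem_filter, Finset.mem_Icc, hS, Finset.mem_image,
      Finset.mem_Icc, not_le]
    constructor
    · rintro ⟨⟨j, ⟨hj1, hj2⟩, rfl⟩, hv⟩
      exact ⟨hpos j hj1 hj2, by omega⟩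
    · rintro ⟨hv1, hv2⟩
      have hva : v < ACK A i := by
        have := (ack_spec A i).1; omega
      obtain ⟨j, hj1, hj2, hj3⟩ := ack_min A i v hv1 hva
      exact ⟨⟨j, ⟨hj1, hj2⟩, hj3⟩, hva⟩
  have h2 := Finset.card_filter_add_card_filter_not
      (s := S) (p := fun v => ACK A i ≤ v)
  rw [h1] at h2
  have h3 : (Finset.Icc 1 (ACK A i - 1)).card = ACK A i - 1 := by
    rw [Nat.card_Icc]; omega
  have hb : bufSize A i = (S.filter (fun v => ACK A i ≤ v)).card := rfl
  omega

/-- Dichotomy for a newly received packet `A_i ∉ {A_1, …, A_{i-1}}`: exactly one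
of the following alternatives holds:
(1) `A_i > ACK_{A,i-1}`, `B_{A,i} = B_{A,i-1} + 1` and `ACK_{A,i} = ACK_{A,i-1}`
    (the new packet is out-of-order and is buffered); or
(2) `A_i = ACK_{A,i-1}`, `B_{A,i} ≤ B_{A,i-1}` and
    `ACK_{A,i} = ACK_{A,i-1} + B_{A,i-1} - B_{A,i} + 1` (the new packet fills
    the first gap).
In particular, if additionally `B_{A,i} = B_{A,i-1}`, then `A_i = ACK_{A,i-1}`
and `ACK_{A,i} = ACK_{A,i-1} + 1`. -/
theorem new_packet_dichotomy (n : ℕ) (A : ℕ → ℕ)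
    (hA : ∀ j, 1 ≤ j → j ≤ n → 0 < A j)
    (i : ℕ) (hi1 : 1 ≤ i) (hin : i ≤ n)
    (hnew : ∀ j, 1 ≤ j → j < i → A j ≠ A i) :
    (Xor'
      (ACK A (i - 1) < A i ∧ bufSize A i = bufSize A (i - 1) + 1 ∧
        ACK A i = ACK A (i - 1))
      (A i = ACK A (i - 1) ∧ bufSize A i ≤ bufSize A (i - 1) ∧
        ACK A i = ACK A (i - 1) + bufSize A (i - 1) - bufSize A i + 1)) ∧
    (bufSize A i = bufSize A (i - 1) →
      A i = ACK A (i - 1) ∧ ACK A i = ACK A (i - 1) + 1) := by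
  classical
  have hIcc : Finset.Icc 1 i = insert i (Finset.Icc 1 (i - 1)) := by
    ext j; simp only [Finset.mem_Icc, Finset.mem_insert]; omega
  have hSeq : (Finset.Icc 1 i).image A = insert (A i) ((Finset.Icc 1 (i - 1)).image A) := by
    rw [hIcc, Finset.image_insert]
  have hni : A i ∉ (Finset.Icc 1 (i - 1)).image A := by
    simp only [Finset.mem_image, Finset.mem_Icc, not_exists]
    rintro j ⟨⟨hj1, hj2⟩, hj3⟩
    exact hnew j hj1 (by omega) hj3
  have hcard : ((Finset.Icc 1 i).image A).card
      = ((Finset.Icc 1 (i - 1)).image A).card + 1 := by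
    rw [hSeq, Finset.card_insert_of_notMem hni]
  have E1 := card_image_eq A (i - 1) (fun j h1 h2 => hA j h1 (by omega))
  have E2 := card_image_eq A i (fun j h1 h2 => hA j h1 (by omega))
  have hpos' := (ack_spec A (i - 1)).1
  have hpos := (ack_spec A i).1
  have haa' : ACK A (i - 1) ≤ ACK A i :=
    Nat.sInf_le ⟨(ack_spec A i).1, fun j h1 h2 => (ack_spec A i).2 j h1 (by omega)⟩
  have hAipos : 0 < A i := hA i hi1 hin
  have hAi_ge : ACK A (i - 1) ≤ A i := by
    by_contra h
    push_neg at h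
    obtain ⟨j, hj1, hj2, hj3⟩ := ack_min A (i - 1) (A i) hAipos h
    exact hnew j hj1 (by omega) hj3
  rcases eq_or_lt_of_le hAi_ge with heq | hlt
  · -- Case 2: A i = ACK A (i-1)
    have hne : ACK A i ≠ ACK A (i - 1) := fun h => by
      exact (ack_spec A i).2 i hi1 le_rfl (by omega)
    have key : ACK A i + bufSize A i = ACK A (i - 1) + bufSize A (i - 1) + 1 := by
      omega
    refine ⟨Or.inr ⟨⟨heq.symm, by omega, by omega⟩, fun h => by omega⟩, fun h => ⟨heq.symm, by omega⟩⟩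
  · -- Case 1: ACK A (i-1) < A i
    have ha'le : ACK A i ≤ ACK A (i - 1) := by
      refine Nat.sInf_le ⟨hpos', fun j h1 h2 hj => ?_⟩
      rcases eq_or_lt_of_le h2 with rfl | hlt2
      · omega
      · exact (ack_spec A (i - 1)).2 j h1 (by omega) hj
    have ha' : ACK A i = ACK A (i - 1) := le_antisymm ha'le haa'
    have hbuf : bufSize A i = bufSize A (i - 1) + 1 := by omega
    exact ⟨Or.inl ⟨⟨hlt, hbuf, ha'⟩, fun h => by omega⟩, fun h => by omega⟩
end

section
/- Let P and Q be permutations of {1, …, n} with identical buffer sequences, i.e. B_{P,i} = B_{Q,i} for all 1 ≤ i ≤ n. Then for every index i with B_{P,i} ≤ B_{P,i−1} one has P_i = Q_i = ACK_{P,i−1}; that is, all permutations with a given buffer sequence agree, at every position where the buffer does not grow, on the received packet ID, which is the smallest ID not received so far. -/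
/-!
Among `A 1, …, A i` (distinct positive values) the ones below `ACK A i` are exactly
`1, …, ACK A i - 1`, so `bufSize A i + ACK A i = i + 1` for a permutation. Equal buffer
sequences therefore force equal acknowledgement sequences, and the buffer fails to grow at
step `i` exactly when the acknowledgement jumps there; a jump at step `i` is only possible
if packet `i` is the missing ID `ACK A (i - 1)`.
-/

open Finset

lemma ACK_set_nonempty (A : ℕ → ℕ) (i : ℕ) :
    {k : ℕ | 0 < k ∧ ∀ j, 1 ≤ j → j ≤ i → A j ≠ k}.Nonempty := by
  refine ⟨(Icc 1 i).sup A + 1, Nat.succ_pos _, fun j hj1 hji heq => ?_⟩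
  have : A j ≤ (Icc 1 i).sup A := le_sup (mem_Icc.2 ⟨hj1, hji⟩)
  omega

lemma ACK_pos (A : ℕ → ℕ) (i : ℕ) : 0 < ACK A i :=
  (Nat.sInf_mem (ACK_set_nonempty A i)).1

lemma apply_ne_ACK (A : ℕ → ℕ) {i j : ℕ} (hj1 : 1 ≤ j) (hji : j ≤ i) : A j ≠ ACK A i :=
  (Nat.sInf_mem (ACK_set_nonempty A i)).2 j hj1 hji

lemma exists_apply_eq_of_lt_ACK (A : ℕ → ℕ) {i m : ℕ} (hm : 0 < m) (hlt : m < ACK A i) :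
    ∃ j, 1 ≤ j ∧ j ≤ i ∧ A j = m := by
  by_contra! h
  exact (Nat.sInf_le ⟨hm, h⟩ : ACK A i ≤ m).not_gt hlt

lemma apply_succ_eq_ACK_of_ACK_lt (A : ℕ → ℕ) {i : ℕ} (hlt : ACK A i < ACK A (i + 1)) :
    A (i + 1) = ACK A i := by
  obtain ⟨j, hj1, hji, hj⟩ := exists_apply_eq_of_lt_ACK A (ACK_pos A i) hlt
  obtain rfl | hj_le : j = i + 1 ∨ j ≤ i := by omega
  · exact hj
  · exact absurd hj (apply_ne_ACK A hj1 hj_le)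

lemma bufSize_zero (A : ℕ → ℕ) : bufSize A 0 = 0 := by
  simp [bufSize]

lemma image_filter_lt_ACK {A : ℕ → ℕ} {i : ℕ} (hpos : ∀ j ∈ Icc 1 i, 0 < A j) :
    ((Icc 1 i).image A).filter (fun v => ¬ ACK A i ≤ v) = Ico 1 (ACK A i) := by
  ext v
  simp only [mem_filter, mem_image, mem_Ico, not_le]
  constructor
  · rintro ⟨⟨j, hj, rfl⟩, hv⟩
    exact ⟨hpos j hj, hv⟩
  · rintro ⟨hv1, hv2⟩
    obtain ⟨j, hj1, hji, hj⟩ := exists_apply_eq_of_lt_ACK A hv1 hv2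
    exact ⟨⟨j, mem_Icc.2 ⟨hj1, hji⟩, hj⟩, hv2⟩

lemma bufSize_add_ACK {A : ℕ → ℕ} {i : ℕ} (hpos : ∀ j ∈ Icc 1 i, 0 < A j)
    (hinj : Set.InjOn A (Icc 1 i)) : bufSize A i + ACK A i = i + 1 := by
  have hsplit := card_filter_add_card_filter_not (s := (Icc 1 i).image A) (fun v => ACK A i ≤ v)
  rw [image_filter_lt_ACK hpos, card_image_of_injOn hinj, Nat.card_Icc, Nat.card_Ico] at hsplit
  have := ACK_pos A i
  unfold bufSize
  omega

lemma IsPermSeq.bufSize_add_ACK {n : ℕ} {A : ℕ → ℕ} (hA : IsPermSeq n A) {i : ℕ}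
    (hi : i ≤ n) : bufSize A i + ACK A i = i + 1 := by
  have hsub : (↑(Icc 1 i) : Set ℕ) ⊆ Set.Icc 1 n := by
    intro j hj
    rw [coe_Icc, Set.mem_Icc] at hj
    exact ⟨hj.1, hj.2.trans hi⟩
  refine _root_.bufSize_add_ACK (fun j hj => ?_) (hA.injOn.mono hsub)
  exact (hA.mapsTo (hsub hj)).1

/-- All permutations of `{1, …, n}` with a given buffer sequence agree, at every
position where the buffer does not grow, on the received packet ID, which is the
smallest ID not received so far. -/
theorem buffer_equiv_forces_ids (n : ℕ) (P Q : ℕ → ℕ)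
    (hP : IsPermSeq n P) (hQ : IsPermSeq n Q)
    (hbuf : ∀ i, 1 ≤ i → i ≤ n → bufSize P i = bufSize Q i) :
    ∀ i, 1 ≤ i → i ≤ n → bufSize P i ≤ bufSize P (i - 1) →
      P i = ACK P (i - 1) ∧ Q i = ACK P (i - 1) := by
  rintro (_ | k) hk1 hi hstall
  · omega
  simp only [Nat.add_sub_cancel] at hstall ⊢
  have hbufk : bufSize P k = bufSize Q k := by
    rcases Nat.eq_zero_or_pos k with rfl | hk
    · rw [bufSize_zero, bufSize_zero]
    · exact hbuf k hk (by omega)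
  have hPk := hP.bufSize_add_ACK (i := k) (by omega)
  have hPk1 := hP.bufSize_add_ACK hi
  have hQk := hQ.bufSize_add_ACK (i := k) (by omega)
  have hQk1 := hQ.bufSize_add_ACK hi
  have hbufk1 := hbuf (k + 1) (by omega) hi
  have hack : ACK Q k = ACK P k := by omega
  refine ⟨apply_succ_eq_ACK_of_ACK_lt P (by omega), hack ▸ apply_succ_eq_ACK_of_ACK_lt Q ?_⟩
  omega
end

section
/- Let W satisfy the stated conditions. Then the map sending a permutation A of {1, …, n} with B(A) = W to the set of pairs {(i, A_i) : i ∈ S_1} is a bijection between the set {A : A is a permutation of {1, …, n} with B_{A,i} = W_i for all i} and the set of perfect matchings of the bipartite graph G(W). In particular, there exists a permutation A of {1, …, n} with B(A) = W if and only if G(W) has a perfect matching. -/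
/-- `seqOf n A` is the 1-indexed sequence (of length `n`) of packet IDs
associated with the tuple `A : Fin n → ℕ` (value `0` outside `{1, …, n}`). -/
def seqOf (n : ℕ) (A : Fin n → ℕ) : ℕ → ℕ :=
  fun i => if h : 1 ≤ i ∧ i ≤ n then A ⟨i - 1, by omega⟩ else 0

/-- The acknowledgement sequence reconstructed from a candidate buffer sequence
`W` (with the convention `W 0 = 0`): `ACK_0 = 1` and, for `i ≥ 1`,
`ACK_i = ACK_{i-1}` if `W_i = W_{i-1} + 1`,
`ACK_i = ACK_{i-1} + W_{i-1} - W_i + 1` if `W_i < W_{i-1}`, and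
`ACK_i = ACK_{i-1} + 1` if `W_i = W_{i-1}`. -/
def ackOfW (W : ℕ → ℕ) : ℕ → ℕ
  | 0 => 1
  | i + 1 =>
      if W (i + 1) = W i + 1 then ackOfW W i
      else if W (i + 1) < W i then ackOfW W i + (W i - W (i + 1)) + 1
      else ackOfW W i + 1

/-- `S_1 = {i ∈ {1, …, n} : W_i = W_{i-1} + 1}`, the set of stages at which a new
out-of-order packet is received. -/
def S1 (n : ℕ) (W : ℕ → ℕ) : Finset ℕ :=
  (Finset.Icc 1 n).filter (fun i => W i = W (i - 1) + 1)

/-- `V_2 = {1, …, n} \ {ACK_{i-1} : i ∉ S_1}`, the right vertex set of the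
bipartite graph `G(W)` (the left vertex set is `V_1 = S_1`). -/
def V2 (n : ℕ) (W : ℕ → ℕ) : Finset ℕ :=
  Finset.Icc 1 n \
    (((Finset.Icc 1 n).filter (fun i => ¬ W i = W (i - 1) + 1)).image
      (fun i => ackOfW W (i - 1)))

/-- `M` is a perfect matching of the bipartite graph `G(W)` on `(V_1, V_2)`,
where `i ∈ V_1 = S_1` is adjacent to `j ∈ V_2` iff `j > ACK_i`: `M` is a set of
pairwise disjoint edges covering all of `V_1` and `V_2`. -/
def IsPerfectMatching (n : ℕ) (W : ℕ → ℕ) (M : Finset (ℕ × ℕ)) : Prop :=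
  (∀ p ∈ M, p.1 ∈ S1 n W ∧ p.2 ∈ V2 n W ∧ ackOfW W p.1 < p.2) ∧
  (∀ i ∈ S1 n W, ∃! j : ℕ, (i, j) ∈ M) ∧
  (∀ j ∈ V2 n W, ∃! i : ℕ, (i, j) ∈ M)

/-- The preimage `B⁻¹(W)`: the set of permutations `A` of `{1, …, n}` whose
buffer sequence is `W`. -/
def bufPreimage (n : ℕ) (W : ℕ → ℕ) : Set (Fin n → ℕ) :=
  {A | IsPermSeq n (seqOf n A) ∧
       ∀ i, 1 ≤ i → i ≤ n → bufSize (seqOf n A) i = W i}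

section proofs
variable {n : ℕ} {W : ℕ → ℕ}

lemma ACK_spec (A : ℕ → ℕ) (i : ℕ) :
    0 < ACK A i ∧ (∀ j, 1 ≤ j → j ≤ i → A j ≠ ACK A i) ∧
      ∀ k, 0 < k → k < ACK A i → ∃ j, 1 ≤ j ∧ j ≤ i ∧ A j = k := by
  have hne : {k : ℕ | 0 < k ∧ ∀ j, 1 ≤ j → j ≤ i → A j ≠ k}.Nonempty := by
    refine ⟨(Finset.Icc 1 i).sup A + 1, Nat.succ_pos _, fun j h1 h2 heq => ?_⟩
    have hle : A j ≤ (Finset.Icc 1 i).sup A :=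
      Finset.le_sup (Finset.mem_Icc.mpr ⟨h1, h2⟩)
    omega
  have hmem := Nat.sInf_mem hne
  refine ⟨hmem.1, hmem.2, fun k hk hlt => ?_⟩
  have hnot : k ∉ {k : ℕ | 0 < k ∧ ∀ j, 1 ≤ j → j ≤ i → A j ≠ k} :=
    Nat.notMem_of_lt_sInf hlt
  simp only [Set.mem_setOf_eq, not_and] at hnot
  have h2 := hnot hk
  push_neg at h2
  exact h2

lemma ACK_eq (A : ℕ → ℕ) (i a : ℕ) (ha : 0 < a)
    (h1 : ∀ j, 1 ≤ j → j ≤ i → A j ≠ a)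
    (h2 : ∀ k, 0 < k → k < a → ∃ j, 1 ≤ j ∧ j ≤ i ∧ A j = k) :
    ACK A i = a := by
  obtain ⟨hp, hn, _⟩ := ACK_spec A i
  have hle : ACK A i ≤ a := Nat.sInf_le ⟨ha, h1⟩
  rcases lt_or_eq_of_le hle with hlt | heq
  · obtain ⟨j, hj1, hj2, hj3⟩ := h2 (ACK A i) hp hlt
    exact absurd hj3 (hn j hj1 hj2)
  · exact heq

lemma ACK_add_card (A : ℕ → ℕ) (i : ℕ)
    (hposA : ∀ j, 1 ≤ j → j ≤ i → 1 ≤ A j)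
    (hinj : ∀ j j', 1 ≤ j → j ≤ i → 1 ≤ j' → j' ≤ i → A j = A j' → j = j') :
    ACK A i + bufSize A i = i + 1 := by
  classical
  obtain ⟨h0, hne, hcov⟩ := ACK_spec A i
  set a := ACK A i with hadef
  set s := (Finset.Icc 1 i).image A with hs
  have hcard : s.card = i := by
    rw [hs, Finset.card_image_of_injOn, Nat.card_Icc]
    · omega
    · intro x hx y hy hxy
      simp only [Finset.coe_Icc, Set.mem_Icc] at hx hy
      exact hinj x y hx.1 hx.2 hy.1 hy.2 hxy
  have hsplit : s.filter (fun v => ¬ a ≤ v) = Finset.Icc 1 (a - 1) := by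
    ext k
    simp only [Finset.mem_filter, hs, Finset.mem_image, Finset.mem_Icc, not_le]
    constructor
    · rintro ⟨⟨j, hj, rfl⟩, hlt⟩
      exact ⟨hposA j hj.1 hj.2, by omega⟩
    · rintro ⟨h1k, h2k⟩
      have hka : k < a := by omega
      obtain ⟨j, hj1, hj2, hj3⟩ := hcov k h1k hka
      exact ⟨⟨j, ⟨hj1, hj2⟩, hj3⟩, hka⟩
  have hcc := Finset.card_filter_add_card_filter_not
    (s := s) (p := fun v => a ≤ v)
  have hb : bufSize A i = (s.filter (fun v => a ≤ v)).card := rfl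
  simp only [hsplit, Nat.card_Icc] at hcc
  rw [hb]
  omega

lemma wle (hW0 : W 0 = 0) (hstep : ∀ i, 1 ≤ i → i ≤ n → W i ≤ W (i - 1) + 1) :
    ∀ i, i ≤ n → W i ≤ i := by
  intro i
  induction i with
  | zero => intro _; simp [hW0]
  | succ k ih =>
    intro h
    have h1 := hstep (k + 1) (by omega) h
    simp only [Nat.add_sub_cancel] at h1
    have h2 := ih (by omega)
    omega

lemma ack_add (hW0 : W 0 = 0) (hstep : ∀ i, 1 ≤ i → i ≤ n → W i ≤ W (i - 1) + 1) :
    ∀ i, i ≤ n → ackOfW W i + W i = i + 1 := by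
  intro i
  induction i with
  | zero => intro _; simp [ackOfW, hW0]
  | succ k ih =>
    intro h
    have h1 := hstep (k + 1) (by omega) h
    simp only [Nat.add_sub_cancel] at h1
    have h2 := ih (by omega)
    simp only [ackOfW]
    split_ifs <;> omega

lemma ack_mono (hW0 : W 0 = 0) (hstep : ∀ i, 1 ≤ i → i ≤ n → W i ≤ W (i - 1) + 1) :
    ∀ i j, i ≤ j → j ≤ n → ackOfW W i ≤ ackOfW W j := by
  intro i j hij hjn
  induction j with
  | zero =>
    have : i = 0 := by omega
    rw [this]
  | succ k ih =>
    rcases Nat.eq_or_lt_of_le hij with heq | hlt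
    · rw [heq]
    · have hik : i ≤ k := by omega
      have h1 := ack_add hW0 hstep (k + 1) hjn
      have h2 := ack_add hW0 hstep k (by omega)
      have h3 := hstep (k + 1) (by omega) hjn
      simp only [Nat.add_sub_cancel] at h3
      have := ih hik (by omega)
      omega

lemma forward_ack (hW0 : W 0 = 0)
    (hstep : ∀ i, 1 ≤ i → i ≤ n → W i ≤ W (i - 1) + 1)
    (A : Fin n → ℕ) (hA : A ∈ bufPreimage n W) :
    ∀ i, i ≤ n → ACK (seqOf n A) i = ackOfW W i := by
  intro i hi
  obtain ⟨hperm, hbuf⟩ := hA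
  have hmaps := hperm.mapsTo
  have hinj := hperm.injOn
  have hadd : ACK (seqOf n A) i + bufSize (seqOf n A) i = i + 1 := by
    apply ACK_add_card
    · intro j h1 h2
      exact (hmaps (Set.mem_Icc.mpr ⟨h1, by omega⟩)).1
    · intro j j' h1 h2 h1' h2' heq
      exact hinj (Set.mem_Icc.mpr ⟨h1, by omega⟩) (Set.mem_Icc.mpr ⟨h1', by omega⟩) heq
  have hack := ack_add hW0 hstep i hi
  rcases Nat.eq_zero_or_pos i with rfl | hipos
  · have h0 : bufSize (seqOf n A) 0 = 0 := by
      simp [bufSize]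
    omega
  · have := hbuf i hipos hi
    omega

lemma forward_vals (hW0 : W 0 = 0)
    (hstep : ∀ i, 1 ≤ i → i ≤ n → W i ≤ W (i - 1) + 1)
    (A : Fin n → ℕ) (hA : A ∈ bufPreimage n W) :
    ∀ i, 1 ≤ i → i ≤ n →
      (W i = W (i - 1) + 1 → ackOfW W i < seqOf n A i) ∧
      (¬ W i = W (i - 1) + 1 → seqOf n A i = ackOfW W (i - 1)) := by
  intro i h1 h2
  have hfa := forward_ack hW0 hstep A hA
  have hai : ACK (seqOf n A) i = ackOfW W i := hfa i h2
  have hai' : ACK (seqOf n A) (i - 1) = ackOfW W (i - 1) := hfa (i - 1) (by omega)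
  have he1 := ack_add hW0 hstep i h2
  have he2 := ack_add hW0 hstep (i - 1) (by omega)
  have hs := hstep i h1 h2
  obtain ⟨hp1, hn1, hc1⟩ := ACK_spec (seqOf n A) i
  obtain ⟨hp2, hn2, hc2⟩ := ACK_spec (seqOf n A) (i - 1)
  have hmaps := hA.1.mapsTo
  have hinj := hA.1.injOn
  have hposi : 1 ≤ seqOf n A i := (hmaps (Set.mem_Icc.mpr ⟨h1, h2⟩)).1
  constructor
  · intro hS1
    have heq : ackOfW W i = ackOfW W (i - 1) := by
      have : i - 1 + 1 = i := by omega
      omega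
    have hne : seqOf n A i ≠ ackOfW W i := by
      rw [← hai]; exact hn1 i h1 le_rfl
    rcases Nat.lt_or_ge (seqOf n A i) (ackOfW W i) with hlt | hge
    · exfalso
      have : seqOf n A i < ACK (seqOf n A) (i - 1) := by omega
      obtain ⟨j, hj1, hj2, hj3⟩ := hc2 (seqOf n A i) hposi this
      have : j = i := hinj (Set.mem_Icc.mpr ⟨hj1, by omega⟩) (Set.mem_Icc.mpr ⟨h1, h2⟩) hj3
      omega
    · omega
  · intro hS1
    have hlt : ackOfW W (i - 1) < ackOfW W i := by
      have hi1 : i - 1 + 1 = i := by omega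
      have : W i ≤ W (i - 1) := by omega
      omega
    have hpos' : 0 < ackOfW W (i - 1) := by omega
    obtain ⟨j, hj1, hj2, hj3⟩ := hc1 (ackOfW W (i - 1)) hpos' (by omega)
    rcases Nat.lt_or_ge j i with hji | hji
    · exfalso
      exact hn2 j hj1 (by omega) (by rw [hai']; exact hj3)
    · have hji' : j = i := by omega
      rw [hji'] at hj3
      exact hj3

end proofs
section backward
variable {n : ℕ} {W : ℕ → ℕ}

lemma S1_mem_iff (i : ℕ) : i ∈ S1 n W ↔ (1 ≤ i ∧ i ≤ n) ∧ W i = W (i - 1) + 1 := by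
  simp [S1, Finset.mem_filter, Finset.mem_Icc]

lemma backward (hW0 : W 0 = 0) (hWn : W n = 0)
    (hstep : ∀ i, 1 ≤ i → i ≤ n → W i ≤ W (i - 1) + 1)
    (M : Finset (ℕ × ℕ)) (hM : IsPerfectMatching n W M) :
    ∃ A ∈ bufPreimage n W,
      (S1 n W).image (fun i => (i, seqOf n A i)) = M := by
  classical
  obtain ⟨hMedge, hMl, hMr⟩ := hM
  set f : ℕ → ℕ := fun i => if h : ∃ j, (i, j) ∈ M then h.choose else 0 with hf
  have hfmem : ∀ i ∈ S1 n W, (i, f i) ∈ M := by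
    intro i hi
    obtain ⟨j, hj, -⟩ := hMl i hi
    have hex : ∃ j, (i, j) ∈ M := ⟨j, hj⟩
    simpa only [hf, dif_pos hex] using hex.choose_spec
  have hfuniq : ∀ i j, (i, j) ∈ M → f i = j := by
    intro i j hij
    have hi : i ∈ S1 n W := (hMedge _ hij).1
    obtain ⟨j', -, hu⟩ := hMl i hi
    rw [hu _ (hfmem i hi), hu _ hij]
  set g : ℕ → ℕ := fun i => if i ∈ S1 n W then f i else ackOfW W (i - 1) with hg
  set A : Fin n → ℕ := fun x => g (x.1 + 1) with hA
  have hseq : ∀ i, 1 ≤ i → i ≤ n → seqOf n A i = g i := by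
    intro i h1 h2
    rw [seqOf, dif_pos ⟨h1, h2⟩]
    show g (i - 1 + 1) = g i
    congr 1
    omega
  have hfV2 : ∀ i ∈ S1 n W, f i ∈ V2 n W ∧ ackOfW W i < f i := by
    intro i hi
    exact ⟨(hMedge _ (hfmem i hi)).2.1, (hMedge _ (hfmem i hi)).2.2⟩
  have hgmem : ∀ i, 1 ≤ i → i ≤ n → 1 ≤ g i ∧ g i ≤ n := by
    intro i h1 h2
    by_cases hi : i ∈ S1 n W
    · simp only [hg, if_pos hi]
      have := (hfV2 i hi).1
      rw [V2, Finset.mem_sdiff, Finset.mem_Icc] at this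
      exact this.1
    · simp only [hg, if_neg hi]
      have he := ack_add hW0 hstep (i - 1) (by omega)
      have hwl := wle hW0 hstep (i - 1) (by omega)
      omega
  have hexcl : ∀ i, 1 ≤ i → i ≤ n → ¬ W i = W (i - 1) + 1 →
      ackOfW W (i - 1) ∈ ((Finset.Icc 1 n).filter
        (fun i => ¬ W i = W (i - 1) + 1)).image (fun i => ackOfW W (i - 1)) := by
    intro i h1 h2 h3
    exact Finset.mem_image.mpr ⟨i, Finset.mem_filter.mpr ⟨Finset.mem_Icc.mpr ⟨h1, h2⟩, h3⟩, rfl⟩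
  have hginj : ∀ i i', 1 ≤ i → i ≤ n → 1 ≤ i' → i' ≤ n → g i = g i' → i = i' := by
    have key : ∀ i i', 1 ≤ i → i ≤ n → 1 ≤ i' → i' ≤ n → i ∈ S1 n W → i' ∉ S1 n W →
        g i ≠ g i' := by
      intro i i' h1 h2 h1' h2' hi hi' heq
      rw [hg] at heq
      simp only [if_pos hi, if_neg hi'] at heq
      have hv2 := (hfV2 i hi).1
      rw [V2, Finset.mem_sdiff] at hv2
      have hnS : ¬ W i' = W (i' - 1) + 1 := by
        intro hc
        exact hi' ((S1_mem_iff i').mpr ⟨⟨h1', h2'⟩, hc⟩)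
      exact hv2.2 (heq ▸ hexcl i' h1' h2' hnS)
    intro i i' h1 h2 h1' h2' heq
    by_cases hi : i ∈ S1 n W <;> by_cases hi' : i' ∈ S1 n W
    · rw [hg] at heq
      simp only [if_pos hi, if_pos hi'] at heq
      have hm1 := hfmem i hi
      have hm2 := hfmem i' hi'
      rw [heq] at hm1
      obtain ⟨i'', -, hu⟩ := hMr (f i') ((hfV2 i' hi').1)
      rw [hu _ hm1, hu _ hm2]
    · exact absurd heq (key i i' h1 h2 h1' h2' hi hi')
    · exact absurd heq.symm (key i' i h1' h2' h1 h2 hi' hi)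
    · -- both not in S1
      rw [hg] at heq
      simp only [if_neg hi, if_neg hi'] at heq
      by_contra hne
      have hstrict : ∀ a b, 1 ≤ a → a < b → b ≤ n → a ∉ S1 n W →
          ackOfW W (b - 1) ≠ ackOfW W (a - 1) := by
        intro a b ha hab hbn haS
        have hnS : ¬ W a = W (a - 1) + 1 := by
          intro hc
          exact haS ((S1_mem_iff a).mpr ⟨⟨ha, by omega⟩, hc⟩)
        have he1 := ack_add hW0 hstep a (by omega)
        have he2 := ack_add hW0 hstep (a - 1) (by omega)
        have hs := hstep a ha (by omega)
        have hlt : ackOfW W (a - 1) < ackOfW W a := by omega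
        have hmono := ack_mono hW0 hstep a (b - 1) (by omega) (by omega)
        omega
      rcases Nat.lt_or_ge i i' with h | h
      · exact hstrict i i' h1 h h2' hi heq.symm
      · exact hstrict i' i h1' (by omega) h2 hi' heq
  have hmapsTo : Set.MapsTo (seqOf n A) (Set.Icc 1 n) (Set.Icc 1 n) := by
    intro x hx
    rw [Set.mem_Icc] at hx
    rw [Set.mem_Icc, hseq x hx.1 hx.2]
    exact hgmem x hx.1 hx.2
  have hinjOn : Set.InjOn (seqOf n A) (Set.Icc 1 n) := by
    intro x hx y hy hxy
    rw [Set.mem_Icc] at hx hy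
    rw [hseq x hx.1 hx.2, hseq y hy.1 hy.2] at hxy
    exact hginj x y hx.1 hx.2 hy.1 hy.2 hxy
  have hbij : Set.BijOn (seqOf n A) (Set.Icc 1 n) (Set.Icc 1 n) :=
    ((Set.finite_Icc 1 n).injOn_iff_bijOn_of_mapsTo hmapsTo).mp hinjOn
  -- the seen sets
  set sn : ℕ → Finset ℕ := fun i => (Finset.Icc 1 i).image (seqOf n A) with hsn
  have hsn_succ : ∀ i, sn (i + 1) = insert (seqOf n A (i + 1)) (sn i) := by
    intro i
    simp only [hsn]
    have h : Finset.Icc 1 (i + 1) = insert (i + 1) (Finset.Icc 1 i) := by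
      ext x
      simp only [Finset.mem_Icc, Finset.mem_insert]
      omega
    rw [h, Finset.image_insert]
  have hkey : ∀ k, k ≤ n →
      (ackOfW W (n - k) ∉ sn (n - k)) ∧
      (∀ m, 1 ≤ m → m < ackOfW W (n - k) → m ∈ sn (n - k)) := by
    intro k
    induction k with
    | zero =>
      intro _
      simp only [Nat.sub_zero]
      have hackn : ackOfW W n = n + 1 := by
        have := ack_add hW0 hstep n le_rfl
        omega
      constructor
      · intro hmem
        simp only [hsn] at hmem
        obtain ⟨j, hj, hj2⟩ := Finset.mem_image.mp hmem
        rw [Finset.mem_Icc] at hj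
        have := (hmapsTo (Set.mem_Icc.mpr ⟨hj.1, hj.2⟩)).2
        omega
      · intro m hm1 hm2
        obtain ⟨x, hx, hx2⟩ := hbij.surjOn (Set.mem_Icc.mpr ⟨hm1, by omega⟩)
        rw [Set.mem_Icc] at hx
        exact Finset.mem_image.mpr ⟨x, Finset.mem_Icc.mpr ⟨hx.1, hx.2⟩, hx2⟩
    | succ k ih =>
      intro hk
      have hin : n - k = (n - (k + 1)) + 1 := by omega
      set i := n - (k + 1) with hidef
      have hIH := ih (by omega)
      rw [hin] at hIH
      have hi1 : 1 ≤ i + 1 := by omega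
      have hi2 : i + 1 ≤ n := by omega
      have hsucc := hsn_succ i
      have he1 := ack_add hW0 hstep (i + 1) hi2
      have he2 := ack_add hW0 hstep i (by omega)
      by_cases hS : (i + 1) ∈ S1 n W
      · have hWi : W (i + 1) = W i + 1 := by
          have := (S1_mem_iff (i + 1)).mp hS
          simpa using this.2
        have hack : ackOfW W (i + 1) = ackOfW W i := by omega
        have hgv : seqOf n A (i + 1) = f (i + 1) := by
          rw [hseq _ hi1 hi2, hg]
          simp [hS]
        have hedge : ackOfW W (i + 1) < f (i + 1) := by
          have := (hfV2 _ hS).2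
          simpa using this
        constructor
        · rw [← hack]
          intro hc
          exact hIH.1 (by rw [hsucc]; exact Finset.mem_insert_of_mem hc)
        · intro m hm1 hm2
          have hmem := hIH.2 m hm1 (by omega)
          rw [hsucc, Finset.mem_insert] at hmem
          rcases hmem with h | h
          · exfalso
            rw [hgv] at h
            omega
          · exact h
      · have hWi : ¬ W (i + 1) = W i + 1 := by
          intro hc
          exact hS ((S1_mem_iff (i + 1)).mpr ⟨⟨hi1, hi2⟩, by simpa using hc⟩)
        have hgv : seqOf n A (i + 1) = ackOfW W i := by
          rw [hseq _ hi1 hi2, hg]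
          simp only [if_neg hS]
          norm_num
        have hwi : W (i + 1) ≤ W i := by
          have := hstep (i + 1) hi1 hi2
          simp only [Nat.add_sub_cancel] at this hWi
          omega
        have hlt : ackOfW W i < ackOfW W (i + 1) := by omega
        constructor
        · intro hc
          simp only [hsn] at hc
          obtain ⟨j, hj, hj2⟩ := Finset.mem_image.mp hc
          rw [Finset.mem_Icc] at hj
          have : j = i + 1 := by
            apply hginj j (i + 1) hj.1 (by omega) hi1 hi2
            rw [← hseq j hj.1 (by omega), ← hseq (i + 1) hi1 hi2, hj2, hgv]
          omega
        · intro m hm1 hm2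
          have hmem := hIH.2 m hm1 (by omega)
          rw [hsucc, Finset.mem_insert] at hmem
          rcases hmem with h | h
          · exfalso
            rw [hgv] at h
            omega
          · exact h
  have hACK : ∀ i, i ≤ n → ACK (seqOf n A) i = ackOfW W i := by
    intro i hi
    have hk := hkey (n - i) (by omega)
    rw [show n - (n - i) = i by omega] at hk
    have he := ack_add hW0 hstep i hi
    have hwl := wle hW0 hstep i hi
    apply ACK_eq
    · omega
    · intro j h1 h2 hc
      exact hk.1 (Finset.mem_image.mpr ⟨j, Finset.mem_Icc.mpr ⟨h1, h2⟩, hc⟩)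
    · intro m hm1 hm2
      obtain ⟨j, hj, hj2⟩ := Finset.mem_image.mp (hk.2 m hm1 hm2)
      rw [Finset.mem_Icc] at hj
      exact ⟨j, hj.1, hj.2, hj2⟩
  have hbuf : ∀ i, 1 ≤ i → i ≤ n → bufSize (seqOf n A) i = W i := by
    intro i h1 h2
    have hadd : ACK (seqOf n A) i + bufSize (seqOf n A) i = i + 1 := by
      apply ACK_add_card
      · intro j hj1 hj2
        exact (hmapsTo (Set.mem_Icc.mpr ⟨hj1, by omega⟩)).1
      · intro j j' hj1 hj2 hj1' hj2' heq
        exact hinjOn (Set.mem_Icc.mpr ⟨hj1, by omega⟩) (Set.mem_Icc.mpr ⟨hj1', by omega⟩) heq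
    have := hACK i h2
    have := ack_add hW0 hstep i h2
    omega
  refine ⟨A, ⟨hbij, hbuf⟩, ?_⟩
  ext p
  simp only [Finset.mem_image]
  constructor
  · rintro ⟨i, hi, rfl⟩
    have hi' := (S1_mem_iff i).mp hi
    have : seqOf n A i = f i := by
      rw [hseq i hi'.1.1 hi'.1.2, hg]
      simp [hi]
    rw [this]
    exact hfmem i hi
  · intro hp
    have h1 := (hMedge p hp).1
    have hi' := (S1_mem_iff p.1).mp h1
    refine ⟨p.1, h1, ?_⟩
    have : seqOf n A p.1 = f p.1 := by
      rw [hseq p.1 hi'.1.1 hi'.1.2, hg]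
      simp [h1]
    rw [this, hfuniq p.1 p.2 hp]

end backward

/-- The map sending a permutation `A ∈ B⁻¹(W)` to the set of pairs
`{(i, A_i) : i ∈ S_1}` is a bijection between `B⁻¹(W)` and the set of perfect
matchings of `G(W)`. In particular, `B⁻¹(W) ≠ ∅` iff `G(W)` has a perfect
matching. -/
theorem preimage_bijects_matchings (n : ℕ) (W : ℕ → ℕ)
    (hW0 : W 0 = 0) (hWn : W n = 0)
    (hpos : ∀ i, 1 ≤ i → i < n → 0 < W i)
    (hstep : ∀ i, 1 ≤ i → i ≤ n → W i ≤ W (i - 1) + 1) :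
    Set.BijOn
      (fun A : Fin n → ℕ => (S1 n W).image (fun i => (i, seqOf n A i)))
      (bufPreimage n W) {M : Finset (ℕ × ℕ) | IsPerfectMatching n W M} ∧
    ((bufPreimage n W).Nonempty ↔
      ∃ M : Finset (ℕ × ℕ), IsPerfectMatching n W M) := by
  have hbij : Set.BijOn
      (fun A : Fin n → ℕ => (S1 n W).image (fun i => (i, seqOf n A i)))
      (bufPreimage n W) {M : Finset (ℕ × ℕ) | IsPerfectMatching n W M} := by
    refine ⟨?_, ?_, ?_⟩
    · -- MapsTo
      intro A hA
      have hperm := hA.1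
      have hmaps := hperm.mapsTo
      have hinj := hperm.injOn
      have hfv := forward_vals hW0 hstep A hA
      simp only [Set.mem_setOf_eq]
      refine ⟨?_, ?_, ?_⟩
      · rintro p hp
        obtain ⟨i, hi, rfl⟩ := Finset.mem_image.mp hp
        have hi' := (S1_mem_iff i).mp hi
        refine ⟨hi, ?_, ?_⟩
        · -- seqOf n A i ∈ V2
          rw [V2, Finset.mem_sdiff]
          constructor
          · have := hmaps (Set.mem_Icc.mpr ⟨hi'.1.1, hi'.1.2⟩)
            rw [Set.mem_Icc] at this
            exact Finset.mem_Icc.mpr this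
          · intro hc
            obtain ⟨j, hj, hj2⟩ := Finset.mem_image.mp hc
            rw [Finset.mem_filter, Finset.mem_Icc] at hj
            have hjv : seqOf n A j = ackOfW W (j - 1) :=
              (hfv j hj.1.1 hj.1.2).2 hj.2
            have : j = i := hinj (Set.mem_Icc.mpr ⟨hj.1.1, hj.1.2⟩)
              (Set.mem_Icc.mpr ⟨hi'.1.1, hi'.1.2⟩) (by rw [hjv, hj2])
            rw [this] at hj
            exact hj.2 hi'.2
        · exact (hfv i hi'.1.1 hi'.1.2).1 hi'.2
      · intro i hi
        refine ⟨seqOf n A i, Finset.mem_image.mpr ⟨i, hi, rfl⟩, ?_⟩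
        intro j' hj'
        obtain ⟨i', hi', heq⟩ := Finset.mem_image.mp hj'
        rw [Prod.mk.injEq] at heq
        rw [← heq.2, heq.1]
      · intro j hj
        have hj' := hj
        rw [V2, Finset.mem_sdiff, Finset.mem_Icc] at hj'
        obtain ⟨x, hx, hx2⟩ := hperm.surjOn (Set.mem_Icc.mpr hj'.1)
        rw [Set.mem_Icc] at hx
        have hxS : x ∈ S1 n W := by
          by_contra hc
          have hnS : ¬ W x = W (x - 1) + 1 := by
            intro hcc
            exact hc ((S1_mem_iff x).mpr ⟨⟨hx.1, hx.2⟩, hcc⟩)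
          have := (hfv x hx.1 hx.2).2 hnS
          apply hj'.2
          apply Finset.mem_image.mpr
          exact ⟨x, Finset.mem_filter.mpr ⟨Finset.mem_Icc.mpr ⟨hx.1, hx.2⟩, hnS⟩,
            by rw [← this, hx2]⟩
        refine ⟨x, Finset.mem_image.mpr ⟨x, hxS, by rw [hx2]⟩, ?_⟩
        intro x' hx'
        obtain ⟨i', hi', heq⟩ := Finset.mem_image.mp hx'
        rw [Prod.mk.injEq] at heq
        have hi'' := (S1_mem_iff i').mp hi'
        have : i' = x := by
          apply hinj (Set.mem_Icc.mpr ⟨hi''.1.1, hi''.1.2⟩) (Set.mem_Icc.mpr hx)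
          rw [heq.2, hx2]
        rw [← heq.1, this]
    · -- InjOn
      intro A hA A' hA' heq
      simp only at heq
      have hfv := forward_vals hW0 hstep A hA
      have hfv' := forward_vals hW0 hstep A' hA'
      have hsame : ∀ i, 1 ≤ i → i ≤ n → seqOf n A i = seqOf n A' i := by
        intro i h1 h2
        by_cases hS : i ∈ S1 n W
        · have hmem : (i, seqOf n A i) ∈ (S1 n W).image
              (fun i => (i, seqOf n A' i)) := by
            rw [← heq]
            exact Finset.mem_image.mpr ⟨i, hS, rfl⟩
          obtain ⟨i', hi', heq2⟩ := Finset.mem_image.mp hmem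
          rw [Prod.mk.injEq] at heq2
          rw [← heq2.2, heq2.1]
        · have hnS : ¬ W i = W (i - 1) + 1 := by
            intro hcc
            exact hS ((S1_mem_iff i).mpr ⟨⟨h1, h2⟩, hcc⟩)
          rw [(hfv i h1 h2).2 hnS, (hfv' i h1 h2).2 hnS]
      funext x
      have hx1 : 1 ≤ x.1 + 1 := by omega
      have hx2 : x.1 + 1 ≤ n := x.isLt
      have h := hsame (x.1 + 1) hx1 hx2
      rw [seqOf, seqOf, dif_pos ⟨hx1, hx2⟩, dif_pos ⟨hx1, hx2⟩] at h
      simpa using h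
    · -- SurjOn
      intro M hM
      obtain ⟨A, hA, hAeq⟩ := backward hW0 hWn hstep M hM
      exact ⟨A, hA, hAeq⟩
  refine ⟨hbij, ?_, ?_⟩
  · rintro ⟨A, hA⟩
    exact ⟨_, hbij.mapsTo hA⟩
  · rintro ⟨M, hM⟩
    obtain ⟨A, hA, -⟩ := hbij.surjOn hM
    exact ⟨A, hA⟩
end

section
/- Modified buffer equivalence refines behavioral equivalence: if P and Q are sequences of positive integers of the same length n, each having no stale duplicates, and their modified buffer sequences coincide (B̄_{P,i} = B̄_{Q,i} for all 1 ≤ i ≤ n), then ACK_{P,i} = ACK_{Q,i} for all 1 ≤ i ≤ n; i.e., the acknowledgement sequence can be uniquely reconstructed from the modified buffer sequence. -/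
/-- Position `i` of `A` is a repeat: `A_i ∈ {A_1, …, A_{i-1}}`. -/
def IsRepeat (A : ℕ → ℕ) (i : ℕ) : Prop :=
  ∃ j, 1 ≤ j ∧ j < i ∧ A j = A i

open Classical in
/-- The modified buffer sequence `B̄(A)`: `B̄_{A,i} = -B_{A,i}` if `i` is a
repeat position, and `B̄_{A,i} = B_{A,i}` otherwise. -/
noncomputable def mbuf (A : ℕ → ℕ) (i : ℕ) : ℤ :=
  if IsRepeat A i then -(bufSize A i : ℤ) else (bufSize A i : ℤ)

/-- `A` has no stale duplicates: every repeated packet is a repeat of a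
still-buffered packet, i.e. `A_i ≥ ACK_{A,i-1}` at every repeat position
`1 ≤ i ≤ n` (duplicates of already uploaded packets are discarded). -/
def NoStaleDup (n : ℕ) (A : ℕ → ℕ) : Prop :=
  ∀ i, 1 ≤ i → i ≤ n → IsRepeat A i → ACK A (i - 1) ≤ A i

namespace MBAux

def S (A : ℕ → ℕ) (i : ℕ) : Finset ℕ := (Finset.Icc 1 i).image A

lemma ack_eq (A : ℕ → ℕ) (i : ℕ) :
    ACK A i = sInf {k : ℕ | 0 < k ∧ k ∉ S A i} := by
  unfold ACK S
  congr 1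
  ext k
  simp only [Set.mem_setOf_eq, Finset.mem_image, Finset.mem_Icc, not_exists, not_and]
  constructor
  · rintro ⟨hk, h⟩
    exact ⟨hk, fun j hj => h j hj.1 hj.2⟩
  · rintro ⟨hk, h⟩
    exact ⟨hk, fun j h1 h2 => h j ⟨h1, h2⟩⟩

lemma buf_eq (A : ℕ → ℕ) (i : ℕ) :
    bufSize A i = ((S A i).filter (fun v => ACK A i ≤ v)).card := rfl

lemma ne_set (A : ℕ → ℕ) (i : ℕ) : {k : ℕ | 0 < k ∧ k ∉ S A i}.Nonempty := by
  refine ⟨(S A i).sup id + 1, Nat.succ_pos _, fun h => ?_⟩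
  have := Finset.le_sup (f := id) h
  simp only [id] at this
  omega

lemma ack_mem (A : ℕ → ℕ) (i : ℕ) : 0 < ACK A i ∧ ACK A i ∉ S A i := by
  rw [ack_eq]
  exact Nat.sInf_mem (ne_set A i)

lemma ack_pos (A : ℕ → ℕ) (i : ℕ) : 0 < ACK A i := (ack_mem A i).1

lemma mem_of_lt_ack (A : ℕ → ℕ) (i : ℕ) {k : ℕ} (hk : 0 < k) (hlt : k < ACK A i) :
    k ∈ S A i := by
  by_contra h
  have := Nat.sInf_le (show k ∈ {k : ℕ | 0 < k ∧ k ∉ S A i} from ⟨hk, h⟩)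
  rw [ack_eq] at hlt
  omega

lemma card_eq (A : ℕ → ℕ) (i : ℕ) (hpos : ∀ v ∈ S A i, 0 < v) :
    (S A i).card + 1 = ACK A i + bufSize A i := by
  rw [buf_eq]
  have hsplit := Finset.card_filter_add_card_filter_not
      (s := S A i) (p := fun v => ACK A i ≤ v)
  have hlow : (S A i).filter (fun v => ¬ ACK A i ≤ v) = Finset.Icc 1 (ACK A i - 1) := by
    ext v
    simp only [Finset.mem_filter, Finset.mem_Icc, not_le]
    constructor
    · rintro ⟨hv, hlt⟩
      exact ⟨hpos v hv, by omega⟩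
    · rintro ⟨h1, h2⟩
      have hack := ack_pos A i
      have hlt : v < ACK A i := by omega
      exact ⟨mem_of_lt_ack A i h1 hlt, hlt⟩
  rw [hlow, Nat.card_Icc] at hsplit
  have := ack_pos A i
  omega

lemma S_succ (A : ℕ → ℕ) (i : ℕ) : S A (i + 1) = insert (A (i + 1)) (S A i) := by
  unfold S
  rw [show Finset.Icc 1 (i + 1) = insert (i + 1) (Finset.Icc 1 i) by
    ext j; simp only [Finset.mem_insert, Finset.mem_Icc]; omega]
  rw [Finset.image_insert]

lemma repeat_iff (A : ℕ → ℕ) (i : ℕ) : IsRepeat A (i + 1) ↔ A (i + 1) ∈ S A i := by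
  unfold IsRepeat S
  simp only [Finset.mem_image, Finset.mem_Icc]
  constructor
  · rintro ⟨j, h1, h2, h3⟩; exact ⟨j, ⟨h1, by omega⟩, h3⟩
  · rintro ⟨j, ⟨h1, h2⟩, h3⟩; exact ⟨j, h1, by omega, h3⟩

lemma S_eq_of_repeat {A : ℕ → ℕ} {i : ℕ} (h : IsRepeat A (i + 1)) :
    S A (i + 1) = S A i := by
  rw [S_succ]
  exact Finset.insert_eq_self.2 ((repeat_iff A i).1 h)

lemma ack_of_repeat {A : ℕ → ℕ} {i : ℕ} (h : IsRepeat A (i + 1)) :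
    ACK A (i + 1) = ACK A i := by
  rw [ack_eq, ack_eq, S_eq_of_repeat h]

lemma buf_of_repeat {A : ℕ → ℕ} {i : ℕ} (h : IsRepeat A (i + 1)) :
    bufSize A (i + 1) = bufSize A i := by
  rw [buf_eq, buf_eq, S_eq_of_repeat h, ack_of_repeat h]

lemma card_succ_of_not_repeat {A : ℕ → ℕ} {i : ℕ} (h : ¬ IsRepeat A (i + 1)) :
    (S A (i + 1)).card = (S A i).card + 1 := by
  rw [S_succ, Finset.card_insert_of_notMem (fun hm => h ((repeat_iff A i).2 hm))]

lemma S_pos {A : ℕ → ℕ} {n i : ℕ} (hn : i ≤ n) (hA : ∀ j, 1 ≤ j → j ≤ n → 0 < A j) :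
    ∀ v ∈ S A i, 0 < v := by
  intro v hv
  simp only [S, Finset.mem_image, Finset.mem_Icc] at hv
  obtain ⟨j, ⟨h1, h2⟩, rfl⟩ := hv
  exact hA j h1 (by omega)

lemma buf_pos_of_repeat {A : ℕ → ℕ} {n i : ℕ} (hn : i + 1 ≤ n) (hs : NoStaleDup n A)
    (h : IsRepeat A (i + 1)) : 0 < bufSize A i := by
  have hmem : A (i + 1) ∈ S A i := (repeat_iff A i).1 h
  have hack : ACK A i ≤ A (i + 1) := by
    have := hs (i + 1) (by omega) hn h
    simpa using this
  rw [buf_eq]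
  exact Finset.card_pos.2 ⟨A (i + 1), Finset.mem_filter.2 ⟨hmem, hack⟩⟩

lemma ack_zero (A : ℕ → ℕ) : ACK A 0 = 1 := by
  rw [ack_eq]
  have h1 : (1 : ℕ) ∈ {k : ℕ | 0 < k ∧ k ∉ S A 0} := by
    refine ⟨one_pos, ?_⟩
    simp [S]
  obtain ⟨hp, -⟩ := Nat.sInf_mem ⟨1, h1⟩
  have h2 := Nat.sInf_le h1
  omega

lemma buf_zero (A : ℕ → ℕ) : bufSize A 0 = 0 := by
  rw [buf_eq]
  simp [S]

lemma step_eq {A : ℕ → ℕ} {n i : ℕ} (hn : i + 1 ≤ n)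
    (hA : ∀ j, 1 ≤ j → j ≤ n → 0 < A j) (h : ¬ IsRepeat A (i + 1)) :
    ACK A (i + 1) + bufSize A (i + 1) = ACK A i + bufSize A i + 1 := by
  have c1 := card_eq A i (S_pos (by omega) hA)
  have c2 := card_eq A (i + 1) (S_pos hn hA)
  have c3 := card_succ_of_not_repeat h
  omega

end MBAux

/-- Modified buffer equivalence refines behavioral equivalence: if `P` and `Q`
are sequences of positive integers of the same length `n`, each having no stale
duplicates, and their modified buffer sequences coincide, then their
acknowledgement sequences coincide. -/
theorem modified_buffer_refines_behavioral (n : ℕ) (P Q : ℕ → ℕ)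
    (hP : ∀ j, 1 ≤ j → j ≤ n → 0 < P j) (hQ : ∀ j, 1 ≤ j → j ≤ n → 0 < Q j)
    (hPs : NoStaleDup n P) (hQs : NoStaleDup n Q)
    (hmbuf : ∀ i, 1 ≤ i → i ≤ n → mbuf P i = mbuf Q i) :
    ∀ i, 1 ≤ i → i ≤ n → ACK P i = ACK Q i := by
  suffices h : ∀ i, i ≤ n → ACK P i = ACK Q i ∧ bufSize P i = bufSize Q i by
    intro i _ h2; exact (h i h2).1
  intro i
  induction i with
  | zero =>
    intro _
    exact ⟨by rw [MBAux.ack_zero, MBAux.ack_zero], by rw [MBAux.buf_zero, MBAux.buf_zero]⟩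
  | succ i ih =>
    intro hn
    obtain ⟨hA, hB⟩ := ih (by omega)
    have hm := hmbuf (i + 1) (by omega) hn
    have hrep : IsRepeat P (i + 1) ↔ IsRepeat Q (i + 1) := by
      constructor
      · intro hr
        by_contra hq
        have h1 : mbuf P (i + 1) = -(bufSize P i : ℤ) := by
          unfold mbuf; rw [if_pos hr, MBAux.buf_of_repeat hr]
        have h2 : mbuf Q (i + 1) = (bufSize Q (i + 1) : ℤ) := by
          unfold mbuf; rw [if_neg hq]
        have h3 := MBAux.buf_pos_of_repeat hn hPs hr
        omega
      · intro hr
        by_contra hq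
        have h1 : mbuf Q (i + 1) = -(bufSize Q i : ℤ) := by
          unfold mbuf; rw [if_pos hr, MBAux.buf_of_repeat hr]
        have h2 : mbuf P (i + 1) = (bufSize P (i + 1) : ℤ) := by
          unfold mbuf; rw [if_neg hq]
        have h3 := MBAux.buf_pos_of_repeat hn hQs hr
        omega
    by_cases hr : IsRepeat P (i + 1)
    · have hrQ := hrep.1 hr
      exact ⟨by rw [MBAux.ack_of_repeat hr, MBAux.ack_of_repeat hrQ, hA],
             by rw [MBAux.buf_of_repeat hr, MBAux.buf_of_repeat hrQ, hB]⟩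
    · have hrQ : ¬ IsRepeat Q (i + 1) := fun h => hr (hrep.2 h)
      have hbP : mbuf P (i + 1) = (bufSize P (i + 1) : ℤ) := by
        unfold mbuf; rw [if_neg hr]
      have hbQ : mbuf Q (i + 1) = (bufSize Q (i + 1) : ℤ) := by
        unfold mbuf; rw [if_neg hrQ]
      have hbuf : bufSize P (i + 1) = bufSize Q (i + 1) := by omega
      have eP := MBAux.step_eq hn hP hr
      have eQ := MBAux.step_eq hn hQ hrQ
      exact ⟨by omega, hbuf⟩
end
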